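/- Let k be a field of characteristic zero and m ≥ 1. With B_0 = k[x_1^{±1}, x_2^{±1}, y, t_1, t_2]/(x_1^{-1} − x_2^{-1}, x_1 − x_2 + y(t_1 − t_2), P(x_1,y,t_1) − P(x_2,y,t_2)) where P(x,y,t) = Σ_{n=1}^m C(m,n)(x^{-1}t)^n y^{n-1}, the k-algebra homomorphism k[x^{±1}, y, t] → B_0 sending (x, y, t) ↦ (x_1, y, t_1) is an isomorphism. -/

import Mathlib

/-!
The inverse of `x ↦ x₁, y ↦ y, t ↦ t₁` is induced by the map `x₁, x₂ ↦ x`, `t₁, t₂ ↦ t`, which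
kills the three relations. The two maps are mutually inverse once `x₁ = x₂` and `t₁ = t₂` in `B₀`.
The first follows from `x₁⁻¹ = x₂⁻¹`; the second relation then reads `y (t₁ - t₂) = 0`, so in
`P(x₁, y, t₁) - P(x₁, y, t₂)` every term of degree `n ≥ 2` contains `y (t₁ⁿ - t₂ⁿ) = 0`, and the
third relation becomes `m x₁⁻¹ (t₁ - t₂) = 0`, where `m` and `x₁⁻¹` are units.
-/

open MvPolynomial

set_option synthInstance.maxHeartbeats 1000000
set_option maxHeartbeats 1000000

namespace Stmt8

variable (k : Type) [Field k] [CharZero k] (m : ℕ)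

/-- The Laurent ring `k[x₁^{±1}, x₂^{±1}, y, t₁, t₂]`, realized as the localization of
`k[x₁,x₂,y,t₁,t₂]` away from `x₁ x₂`. Variables: `X 0 = x₁`, `X 1 = x₂`, `X 2 = y`,
`X 3 = t₁`, `X 4 = t₂`. -/
abbrev S := Localization.Away ((X 0 * X 1 : MvPolynomial (Fin 5) k))

noncomputable def x₁ : S k := algebraMap (MvPolynomial (Fin 5) k) (S k) (X 0)
noncomputable def x₂ : S k := algebraMap (MvPolynomial (Fin 5) k) (S k) (X 1)
noncomputable def y : S k := algebraMap (MvPolynomial (Fin 5) k) (S k) (X 2)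
noncomputable def t₁ : S k := algebraMap (MvPolynomial (Fin 5) k) (S k) (X 3)
noncomputable def t₂ : S k := algebraMap (MvPolynomial (Fin 5) k) (S k) (X 4)

/-- `P(x,y,t) = Σ_{n=1}^m C(m,n) (x⁻¹ t)^n y^{n-1}`. -/
noncomputable def P (x t : S k) : S k :=
  ∑ n ∈ Finset.Icc 1 m, (m.choose n : S k) * (Ring.inverse x * t) ^ n * y k ^ (n - 1)

noncomputable def I₀ : Ideal (S k) :=
  Ideal.span {Ring.inverse (x₁ k) - Ring.inverse (x₂ k),
    x₁ k - x₂ k + y k * (t₁ k - t₂ k),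
    P k m (x₁ k) (t₁ k) - P k m (x₂ k) (t₂ k)}

/-- The Laurent ring `k[x^{±1}, y, t]`, realized as the localization of `k[x,y,t]` away
from `x`. Variables: `X 0 = x`, `X 1 = y`, `X 2 = t`. -/
abbrev L := Localization.Away ((X 0 : MvPolynomial (Fin 3) k))

end Stmt8

section RingInverse

variable {M₀ N₀ F : Type*} [MonoidWithZero M₀] [MonoidWithZero N₀]

lemma map_ringInverse [FunLike F M₀ N₀] [MonoidHomClass F M₀ N₀] (f : F) {a : M₀}
    (ha : IsUnit a) : f (Ring.inverse a) = Ring.inverse (f a) := by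
  rw [← one_mul (Ring.inverse (f a)), Ring.eq_mul_inverse_iff_mul_eq _ _ _ (ha.map f),
    ← map_mul, Ring.inverse_mul_cancel _ ha, map_one]

lemma eq_of_ringInverse_eq {a b : M₀} (ha : IsUnit a) (hb : IsUnit b)
    (h : Ring.inverse a = Ring.inverse b) : a = b := by
  rw [← Ring.inverse_inverse ha, h, Ring.inverse_inverse hb]

end RingInverse

lemma mul_pow_sub_pow_eq_zero {R : Type*} [CommRing R] {y a b : R} (h : y * (a - b) = 0)
    (n : ℕ) : y * (a ^ n - b ^ n) = 0 := by
  obtain ⟨g, hg⟩ := sub_dvd_pow_sub_pow a b n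
  rw [hg, ← mul_assoc, h, zero_mul]

lemma sum_choose_sub_sum_choose_of_mul_sub_eq_zero {R : Type*} [CommRing R] (m : ℕ)
    {c y a b : R} (h : y * (a - b) = 0) :
    ∑ n ∈ Finset.Icc 1 m, (m.choose n : R) * (c * a) ^ n * y ^ (n - 1) -
      ∑ n ∈ Finset.Icc 1 m, (m.choose n : R) * (c * b) ^ n * y ^ (n - 1) =
      m * c * (a - b) := by
  rw [← Finset.sum_sub_distrib, Finset.sum_eq_single 1]
  · simp only [Nat.choose_one_right, pow_one, Nat.sub_self, pow_zero]
    ring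
  · intro n hn hn1
    obtain ⟨j, rfl⟩ : ∃ j, n = j + 2 := ⟨n - 2, by grind⟩
    rw [show j + 2 - 1 = j + 1 by omega]
    linear_combination (m.choose (j + 2) * c ^ (j + 2) * y ^ j) *
      mul_pow_sub_pow_eq_zero h (j + 2)
  · intro h1
    obtain rfl : m = 0 := by simpa using h1
    simp

namespace Stmt8

section

variable (k : Type) [Field k] (m : ℕ)

lemma isUnit_x₁ : IsUnit (x₁ k) :=
  isUnit_of_mul_isUnit_left (y := x₂ k)
    (by rw [x₁, x₂, ← map_mul]; exact IsLocalization.Away.algebraMap_isUnit _)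

lemma isUnit_x₂ : IsUnit (x₂ k) :=
  isUnit_of_mul_isUnit_right (x := x₁ k)
    (by rw [x₁, x₂, ← map_mul]; exact IsLocalization.Away.algebraMap_isUnit _)

lemma map_P {B : Type*} [CommRing B] (f : S k →+* B) {x : S k} (hx : IsUnit x) (t : S k) :
    f (P k m x t) = ∑ n ∈ Finset.Icc 1 m,
      (m.choose n : B) * (Ring.inverse (f x) * f t) ^ n * f (y k) ^ (n - 1) := by
  simp only [P, map_sum, map_mul, map_pow, map_natCast, map_ringInverse f hx]

local notation "π" => Ideal.Quotient.mk (I₀ k m)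

lemma mk_x₁_eq_mk_x₂ : π (x₁ k) = π (x₂ k) := by
  refine eq_of_ringInverse_eq ((isUnit_x₁ k).map π) ((isUnit_x₂ k).map π) ?_
  rw [← map_ringInverse π (isUnit_x₁ k), ← map_ringInverse π (isUnit_x₂ k),
    Ideal.Quotient.mk_eq_mk_iff_sub_mem]
  exact Ideal.subset_span (by simp)

lemma mk_y_mul_sub_eq_zero : π (y k) * (π (t₁ k) - π (t₂ k)) = 0 := by
  have h : π (x₁ k - x₂ k + y k * (t₁ k - t₂ k)) = 0 :=
    Ideal.Quotient.eq_zero_iff_mem.mpr (Ideal.subset_span (by simp))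
  simpa [mk_x₁_eq_mk_x₂] using h

lemma mk_t₁_eq_mk_t₂ (hm : (m : k) ≠ 0) : π (t₁ k) = π (t₂ k) := by
  have hP : π (P k m (x₁ k) (t₁ k)) - π (P k m (x₂ k) (t₂ k)) = 0 := by
    rw [← map_sub, Ideal.Quotient.eq_zero_iff_mem]
    exact Ideal.subset_span (by simp)
  rw [map_P k m π (isUnit_x₁ k), map_P k m π (isUnit_x₂ k), ← mk_x₁_eq_mk_x₂,
    sum_choose_sub_sum_choose_of_mul_sub_eq_zero m (mk_y_mul_sub_eq_zero k m)] at hP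
  have hmu : IsUnit (m : S k ⧸ I₀ k m) := by
    simpa using (isUnit_iff_ne_zero.mpr hm).map (algebraMap k (S k ⧸ I₀ k m))
  have hinv : IsUnit (Ring.inverse (π (x₁ k))) := ((isUnit_x₁ k).map π).ringInverse
  rw [mul_assoc, hmu.mul_right_eq_zero, hinv.mul_right_eq_zero, sub_eq_zero] at hP
  exact hP

local notation "ι₃" => algebraMap (MvPolynomial (Fin 3) k) (L k)

noncomputable def collapse : S k →ₐ[k] L k :=
  IsLocalization.Away.liftAlgHom (X 0 * X 1)
    (f := aeval ![ι₃ (X 0), ι₃ (X 0), ι₃ (X 1), ι₃ (X 2), ι₃ (X 2)])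
    (by simpa using (IsLocalization.Away.algebraMap_isUnit (X 0 : MvPolynomial (Fin 3) k)).pow 2)

@[simp] lemma collapse_x₁ : collapse k (x₁ k) = ι₃ (X 0) := by
  simp [collapse, x₁, IsLocalization.Away.lift_eq]

@[simp] lemma collapse_x₂ : collapse k (x₂ k) = ι₃ (X 0) := by
  simp [collapse, x₂, IsLocalization.Away.lift_eq]

@[simp] lemma collapse_y : collapse k (y k) = ι₃ (X 1) := by
  simp [collapse, y, IsLocalization.Away.lift_eq]

@[simp] lemma collapse_t₁ : collapse k (t₁ k) = ι₃ (X 2) := by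
  simp [collapse, t₁, IsLocalization.Away.lift_eq]

@[simp] lemma collapse_t₂ : collapse k (t₂ k) = ι₃ (X 2) := by
  simp [collapse, t₂, IsLocalization.Away.lift_eq]

lemma collapse_eq_zero_of_mem_I₀ {a : S k} (ha : a ∈ I₀ k m) : collapse k a = 0 := by
  have hP : collapse k (P k m (x₁ k) (t₁ k)) = collapse k (P k m (x₂ k) (t₂ k)) := by
    rw [← AlgHom.coe_toRingHom, map_P k m _ (isUnit_x₁ k), map_P k m _ (isUnit_x₂ k)]
    simp
  refine (Ideal.span_le (I := RingHom.ker (collapse k))).mpr ?_ ha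
  rintro _ (rfl | rfl | rfl)
  · simp [map_ringInverse _ (isUnit_x₁ k), map_ringInverse _ (isUnit_x₂ k)]
  · simp
  · simp [hP]

noncomputable def toL : S k ⧸ I₀ k m →ₐ[k] L k :=
  Ideal.Quotient.liftₐ (I₀ k m) (collapse k) fun _ ↦ collapse_eq_zero_of_mem_I₀ k m

@[simp] lemma toL_mk (a : S k) : toL k m (π a) = collapse k a := rfl

noncomputable def ofL : L k →ₐ[k] S k ⧸ I₀ k m :=
  IsLocalization.Away.liftAlgHom (X 0) (f := aeval ![π (x₁ k), π (y k), π (t₁ k)])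
    (by simpa using (isUnit_x₁ k).map π)

@[simp] lemma ofL_algebraMap (p : MvPolynomial (Fin 3) k) :
    ofL k m (ι₃ p) = aeval ![π (x₁ k), π (y k), π (t₁ k)] p := by
  simp [ofL, IsLocalization.Away.lift_eq]

lemma toL_comp_ofL : (toL k m).comp (ofL k m) = AlgHom.id k (L k) := by
  refine IsLocalization.algHom_ext (Submonoid.powers (X 0 : MvPolynomial (Fin 3) k))
    (MvPolynomial.algHom_ext fun i ↦ ?_)
  fin_cases i <;> simp [Algebra.algHom]

lemma ofL_comp_toL (hm : (m : k) ≠ 0) :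
    (ofL k m).comp (toL k m) = AlgHom.id k (S k ⧸ I₀ k m) := by
  refine Ideal.Quotient.algHom_ext _
    (IsLocalization.algHom_ext (Submonoid.powers (X 0 * X 1 : MvPolynomial (Fin 5) k))
      (MvPolynomial.algHom_ext fun i ↦ ?_))
  fin_cases i <;>
    simp [Algebra.algHom, ← x₁.eq_1, ← x₂.eq_1, ← y.eq_1, ← t₁.eq_1, ← t₂.eq_1,
      mk_x₁_eq_mk_x₂, mk_t₁_eq_mk_t₂ k m hm]

noncomputable def equivL (hm : (m : k) ≠ 0) : L k ≃ₐ[k] S k ⧸ I₀ k m :=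
  AlgEquiv.ofAlgHom (ofL k m) (toL k m) (ofL_comp_toL k m hm) (toL_comp_ofL k m)

end

variable (k : Type) [Field k] [CharZero k] (m : ℕ)

/-- The `k`-algebra homomorphism `k[x^{±1}, y, t] → B₀` sending `x ↦ x₁`, `y ↦ y`,
`t ↦ t₁` is an isomorphism. -/
theorem stmt8 (hm : 1 ≤ m) :
    ∃ e : L k ≃+* (S k ⧸ I₀ k m),
      e (algebraMap (MvPolynomial (Fin 3) k) (L k) (X 0)) =
          Ideal.Quotient.mk (I₀ k m) (x₁ k) ∧
      e (algebraMap (MvPolynomial (Fin 3) k) (L k) (X 1)) =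
          Ideal.Quotient.mk (I₀ k m) (y k) ∧
      e (algebraMap (MvPolynomial (Fin 3) k) (L k) (X 2)) =
          Ideal.Quotient.mk (I₀ k m) (t₁ k) ∧
      ∀ c : k, e (algebraMap k (L k) c) = algebraMap k (S k ⧸ I₀ k m) c := by
  have hm' : (m : k) ≠ 0 := Nat.cast_ne_zero.mpr (by omega)
  refine ⟨(equivL k m hm').toRingEquiv, ?_, ?_, ?_, (equivL k m hm').commutes⟩ <;>
    simp [equivL]

end Stmt8
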